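/- arXiv:2209.02598 — 4 statements merged into one kernel-verified Lean document; each statement's English description precedes it below -/
import Mathlib

section
/- Let (Ω,𝓕,μ) be a measure space, p ∈ [1,∞), and let 𝒜 ⊂ L^p be uniformly integrable, meaning inf over g ∈ L^p, g ≥ 0, of sup_{f∈𝒜} ∫_{|f|>g} |f|^p dμ equals 0. Then 𝒜 is uniformly approximable: for every ε > 0 there is k such that every f ∈ 𝒜 is within ε in L^p of some simple function taking at most k values. -/
open MeasureTheory ENNReal Filter Topology

variable {Ω : Type*} [MeasurableSpace Ω]

/-- A measurable function taking at most `k` distinct values. -/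
def IsSimpleLE (k : ℕ) (g : Ω → ℝ) : Prop :=
  Measurable g ∧ ∃ s : Finset ℝ, s.card ≤ k ∧ ∀ x, g x ∈ s

/-- The set `𝒢_{p,k}` of elements of `L^p` that agree a.e. with a measurable
function taking at most `k` distinct values. -/
def Gpk (p : ℝ≥0∞) (μ : MeasureTheory.Measure Ω) (k : ℕ) : Set (Lp ℝ p μ) :=
  {f | ∃ g : Ω → ℝ, IsSimpleLE k g ∧ (f : Ω → ℝ) =ᵐ[μ] g}

theorem uniformlyIntegrable_implies_uniformlyApproximable (μ : MeasureTheory.Measure Ω)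
    (p : ℝ) (hp : 1 ≤ p) [Fact (1 ≤ ENNReal.ofReal p)]
    (𝒜 : Set (Lp ℝ (ENNReal.ofReal p) μ))
    (hUI : ∀ ε > (0 : ℝ), ∃ g : Ω → ℝ, (∀ x, 0 ≤ g x) ∧ MemLp g (ENNReal.ofReal p) μ ∧
      ∀ f ∈ 𝒜, ∫ x in {x | g x < |(f : Ω → ℝ) x|}, |(f : Ω → ℝ) x| ^ p ∂μ ≤ ε) :
    ∀ ε > (0 : ℝ), ∃ k : ℕ, ∀ f ∈ 𝒜, ∃ h ∈ Gpk (ENNReal.ofReal p) μ k, ‖f - h‖ ≤ ε := by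
  intro ε hε
  have hp0 : (0:ℝ) < p := lt_of_lt_of_le one_pos hp
  have hP0 : ENNReal.ofReal p ≠ 0 := (ENNReal.ofReal_pos.mpr hp0).ne'
  have hPtop : ENNReal.ofReal p ≠ ⊤ := ENNReal.ofReal_ne_top
  have hPt : (ENNReal.ofReal p).toReal = p := ENNReal.toReal_ofReal hp0.le
  set η : ℝ≥0∞ := ENNReal.ofReal ε ^ p with hηdef
  have hη0 : η ≠ 0 :=
    (ENNReal.rpow_pos (ENNReal.ofReal_pos.mpr hε) ENNReal.ofReal_ne_top).ne'
  have hη4 : (0:ℝ≥0∞) < η/4 := ENNReal.div_pos hη0 (by norm_num)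
  have hηtop : η ≠ ⊤ := (ENNReal.rpow_lt_top_of_nonneg hp0.le ENNReal.ofReal_ne_top).ne
  have hη4top : η/4 ≠ ⊤ := (ENNReal.div_lt_top hηtop (by norm_num)).ne
  -- pick ε₁ and the dominating function g
  have hε1 : 0 < (η/4).toReal := ENNReal.toReal_pos hη4.ne' hη4top
  obtain ⟨g, hg0, hgmem, hgtail⟩ := hUI ((η/4).toReal) hε1
  have hofε1 : ENNReal.ofReal ((η/4).toReal) = η/4 := ENNReal.ofReal_toReal hη4top
  -- measurable representative of g
  set g' : Ω → ℝ := hgmem.aestronglyMeasurable.mk g with hg'def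
  have hg'meas : Measurable g' := hgmem.aestronglyMeasurable.stronglyMeasurable_mk.measurable
  have hgg' : g =ᵐ[μ] g' := hgmem.aestronglyMeasurable.ae_eq_mk
  have hg'mem : MemLp g' (ENNReal.ofReal p) μ := hgmem.ae_eq hgg'
  set G : Ω → ℝ≥0∞ := fun x => (‖g' x‖₊ : ℝ≥0∞) ^ p with hGdef
  have hGmeas : Measurable G := hg'meas.enorm.pow measurable_const
  have hGint : ∫⁻ x, G x ∂μ ≠ ⊤ := by
    have h1 := hg'mem.eLpNorm_ne_top
    rw [eLpNorm_eq_lintegral_rpow_enorm_toReal hP0 hPtop, hPt] at h1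
    intro hcon
    apply h1
    rw [show (∫⁻ x, ‖g' x‖ₑ ^ p ∂μ) = ⊤ from hcon]
    exact ENNReal.top_rpow_of_pos (by positivity)
  -- choose M (large-value truncation level)
  obtain ⟨M, hM1, hMtail⟩ :
      ∃ M : ℝ, 1 ≤ M ∧ ∫⁻ x, ({x | M < g' x}.indicator G) x ∂μ ≤ η/4 := by
    have hmeasn : ∀ n : ℕ, Measurable fun x => ({x | (n:ℝ) < g' x}.indicator G) x := fun n =>
      hGmeas.indicator (measurableSet_lt measurable_const hg'meas)
    have hbound : ∀ n : ℕ, (fun x => ({x | (n:ℝ) < g' x}.indicator G) x) ≤ᵐ[μ] G :=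
      fun n => Filter.Eventually.of_forall (fun x => Set.indicator_le_self _ _ x)
    have hlim : ∀ᵐ x ∂μ,
        Tendsto (fun n : ℕ => ({x | (n:ℝ) < g' x}.indicator G) x) atTop (𝓝 ((fun _ => 0) x)) := by
      refine Filter.Eventually.of_forall (fun x => ?_)
      obtain ⟨n0, hn0⟩ := exists_nat_ge (g' x)
      refine tendsto_const_nhds.congr' ?_
      filter_upwards [Filter.eventually_ge_atTop n0] with n hn
      have hxn : ¬ ((n:ℝ) < g' x) := not_lt.mpr (hn0.trans (by exact_mod_cast hn))
      simp [Set.indicator_of_notMem, hxn]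
    have htend := MeasureTheory.tendsto_lintegral_of_dominated_convergence
      G hmeasn hbound hGint hlim
    rw [lintegral_zero] at htend
    have hev := htend.eventually_lt_const hη4
    obtain ⟨n, hn, hn1⟩ := (hev.and (Filter.eventually_ge_atTop 1)).exists
    exact ⟨(n:ℝ), by exact_mod_cast hn1, hn.le⟩
  -- choose c (small-value truncation level)
  obtain ⟨c, hc0, hctail⟩ :
      ∃ c : ℝ, 0 < c ∧ ∫⁻ x, ENNReal.ofReal (min (max (g' x) 0) c ^ p) ∂μ ≤ η/4 := by
    have hmeasn : ∀ n : ℕ,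
        Measurable fun x => ENNReal.ofReal (min (max (g' x) 0) (1/((n:ℝ)+1)) ^ p) := fun n =>
      ENNReal.measurable_ofReal.comp
        (((hg'meas.max measurable_const).min measurable_const).pow measurable_const)
    have hbound : ∀ n : ℕ,
        (fun x => ENNReal.ofReal (min (max (g' x) 0) (1/((n:ℝ)+1)) ^ p)) ≤ᵐ[μ] G := by
      intro n
      refine Filter.Eventually.of_forall (fun x => ?_)
      have h2 : (0:ℝ) ≤ min (max (g' x) 0) (1/((n:ℝ)+1)) :=
        le_min (le_max_right _ _) (by positivity)
      have h1 : min (max (g' x) 0) (1/((n:ℝ)+1)) ≤ |g' x| :=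
        (min_le_left _ _).trans (max_le (le_abs_self _) (abs_nonneg _))
      calc ENNReal.ofReal (min (max (g' x) 0) (1/((n:ℝ)+1)) ^ p)
          ≤ ENNReal.ofReal (|g' x| ^ p) :=
            ENNReal.ofReal_le_ofReal (Real.rpow_le_rpow h2 h1 hp0.le)
        _ = ENNReal.ofReal |g' x| ^ p :=
            (ENNReal.ofReal_rpow_of_nonneg (abs_nonneg _) hp0.le).symm
        _ = G x := by rw [hGdef, ← Real.norm_eq_abs, ofReal_norm, enorm_eq_nnnorm]
    have hlim : ∀ᵐ x ∂μ,
        Tendsto (fun n : ℕ => ENNReal.ofReal (min (max (g' x) 0) (1/((n:ℝ)+1)) ^ p)) atTop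
          (𝓝 ((fun _ => 0) x)) := by
      refine Filter.Eventually.of_forall (fun x => ?_)
      have hsq : Tendsto (fun n : ℕ => min (max (g' x) 0) (1/((n:ℝ)+1))) atTop (𝓝 0) :=
        squeeze_zero (fun n => le_min (le_max_right _ _) (by positivity))
          (fun n => min_le_right _ _) tendsto_one_div_add_atTop_nhds_zero_nat
      have hcont : ContinuousAt (fun y : ℝ => ENNReal.ofReal (y ^ p)) 0 :=
        ENNReal.continuous_ofReal.continuousAt.comp
          (Real.continuousAt_rpow_const 0 p (Or.inr hp0.le))
      have := hcont.tendsto.comp hsq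
      simpa [Function.comp_def, Real.zero_rpow hp0.ne'] using this
    have htend := MeasureTheory.tendsto_lintegral_of_dominated_convergence
      G hmeasn hbound hGint hlim
    rw [lintegral_zero] at htend
    obtain ⟨n, hn⟩ := (htend.eventually_lt_const hη4).exists
    exact ⟨1/((n:ℝ)+1), by positivity, hn.le⟩
  -- the set where g' > c has finite measure
  have hmfin : μ {x | c < g' x} ≠ ⊤ := by
    have hsub : {x | c < g' x} ⊆ {x | ENNReal.ofReal c ^ p ≤ G x} := by
      intro x hx
      have h1 : c ≤ |g' x| := (le_of_lt hx).trans (le_abs_self _)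
      have h2 : ENNReal.ofReal c ≤ (‖g' x‖₊ : ℝ≥0∞) := by
        rw [← enorm_eq_nnnorm, ← ofReal_norm, Real.norm_eq_abs]
        exact ENNReal.ofReal_le_ofReal h1
      exact ENNReal.rpow_le_rpow h2 hp0.le
    have hcp0 : (ENNReal.ofReal c) ^ p ≠ 0 :=
      (ENNReal.rpow_pos (ENNReal.ofReal_pos.mpr hc0) ENNReal.ofReal_ne_top).ne'
    have hcpt : (ENNReal.ofReal c) ^ p ≠ ⊤ :=
      (ENNReal.rpow_lt_top_of_nonneg hp0.le ENNReal.ofReal_ne_top).ne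
    have hle : μ {x | c < g' x} ≤ (∫⁻ x, G x ∂μ) / (ENNReal.ofReal c ^ p) :=
      le_trans (measure_mono hsub)
        (meas_ge_le_lintegral_div hGmeas.aemeasurable hcp0 hcpt)
    exact (lt_of_le_of_lt hle (ENNReal.div_lt_top hGint hcp0)).ne
  -- choose δ (quantization step)
  obtain ⟨δ, hδ0, hδsmall⟩ :
      ∃ δ : ℝ, 0 < δ ∧ ENNReal.ofReal (δ ^ p) * μ {x | c < g' x} ≤ η/4 := by
    set m := μ {x | c < g' x} with hmdef
    have hm1top : m + 1 ≠ ⊤ := by simp [ENNReal.add_eq_top, hmfin]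
    have hr0 : (0:ℝ≥0∞) < min 1 ((η/4)/(m+1)) :=
      lt_min one_pos (ENNReal.div_pos hη4.ne' hm1top)
    have hrtop : min 1 ((η/4)/(m+1)) ≠ ⊤ :=
      (lt_of_le_of_lt (min_le_left _ _) ENNReal.one_lt_top).ne
    set r : ℝ≥0∞ := min 1 ((η/4)/(m+1)) with hrdef
    refine ⟨(r.toReal) ^ (1/p), Real.rpow_pos_of_pos (ENNReal.toReal_pos hr0.ne' hrtop) _, ?_⟩
    have hδp : ((r.toReal) ^ (1/p)) ^ p = r.toReal := by
      rw [← Real.rpow_mul ENNReal.toReal_nonneg, one_div_mul_cancel hp0.ne', Real.rpow_one]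
    rw [hδp, ENNReal.ofReal_toReal hrtop]
    calc r * m ≤ ((η/4)/(m+1)) * (m+1) :=
          mul_le_mul' (min_le_right _ _) le_self_add
      _ = (m+1) * ((η/4)/(m+1)) := mul_comm _ _
      _ = η/4 := ENNReal.mul_div_cancel (by simp) hm1top
  -- the number of values
  set N : ℤ := ⌈M / δ⌉ with hNdef
  have hN0 : 0 < N := Int.ceil_pos.mpr (div_pos (lt_of_lt_of_le one_pos hM1) hδ0)
  refine ⟨(2*N+1).toNat, ?_⟩
  intro f hf
  -- measurable representative of f
  set F : Ω → ℝ := (Lp.aestronglyMeasurable f).mk _ with hFdef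
  have hFmeas : Measurable F :=
    (Lp.aestronglyMeasurable f).stronglyMeasurable_mk.measurable
  have hfF : (f : Ω → ℝ) =ᵐ[μ] F := (Lp.aestronglyMeasurable f).ae_eq_mk
  -- the good set and the quantized function
  set S : Set Ω := {x | c < |F x| ∧ |F x| ≤ g' x ∧ g' x ≤ M} with hSdef
  have hSmeas : MeasurableSet S := by
    rw [hSdef, Set.setOf_and, Set.setOf_and]
    exact (measurableSet_lt measurable_const hFmeas.abs).inter
      ((measurableSet_le hFmeas.abs hg'meas).inter (measurableSet_le hg'meas measurable_const))
  set q : Ω → ℝ := fun x => δ * ⌊F x / δ⌋ with hqdef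
  have hqmeas : Measurable q :=
    measurable_const.mul
      ((measurable_from_top : Measurable (fun n : ℤ => (n:ℝ))).comp (hFmeas.div_const δ).floor)
  set h : Ω → ℝ := S.indicator q with hhdef
  have hhmeas : Measurable h := hqmeas.indicator hSmeas
  -- q is close to F
  have hq_close : ∀ x, |F x - q x| ≤ δ := by
    intro x
    have h1 : δ * ⌊F x / δ⌋ ≤ F x := by
      have h2 := mul_le_mul_of_nonneg_left (Int.floor_le (F x / δ)) hδ0.le
      rwa [mul_div_cancel₀ _ hδ0.ne'] at h2
    have h2 : F x < δ * ⌊F x / δ⌋ + δ := by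
      have h3 := mul_lt_mul_of_pos_left (Int.lt_floor_add_one (F x / δ)) hδ0
      rw [mul_add, mul_one, mul_div_cancel₀ _ hδ0.ne'] at h3
      exact h3
    rw [hqdef, abs_le]
    constructor <;> simp only [] <;> linarith
  -- the finite value set
  set s : Finset ℝ := (Finset.Icc (-N) N).image (fun n : ℤ => δ * n) with hsdef
  have hcard : s.card ≤ (2*N+1).toNat := by
    refine Finset.card_image_le.trans ?_
    rw [Int.card_Icc]
    omega
  have hmem : ∀ x, h x ∈ s := by
    intro x
    rw [hhdef]
    by_cases hx : x ∈ S
    · rw [Set.indicator_of_mem hx]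
      refine Finset.mem_image.mpr ⟨⌊F x / δ⌋, ?_, rfl⟩
      rw [Finset.mem_Icc]
      obtain ⟨hx1, hx2, hx3⟩ := hx
      have hFM : -M ≤ F x ∧ F x ≤ M := abs_le.mp (hx2.trans hx3)
      constructor
      · calc -N = ⌊-(M/δ)⌋ := by rw [Int.floor_neg, hNdef]
          _ ≤ ⌊F x / δ⌋ := by
            refine Int.floor_mono ?_
            rw [← neg_div]
            exact (div_le_div_iff_of_pos_right hδ0).mpr hFM.1
      · calc ⌊F x / δ⌋ ≤ ⌊M/δ⌋ :=
              Int.floor_mono ((div_le_div_iff_of_pos_right hδ0).mpr hFM.2)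
          _ ≤ N := Int.floor_le_ceil _
    · rw [Set.indicator_of_notMem hx]
      refine Finset.mem_image.mpr ⟨0, ?_, by simp⟩
      rw [Finset.mem_Icc]
      constructor <;> omega
  -- h is in Lᵖ
  have hhmem : MemLp h (ENNReal.ofReal p) μ := by
    refine MemLp.of_le (memLp_indicator_const (ENNReal.ofReal p)
      (measurableSet_lt measurable_const hg'meas) (M + δ) (Or.inr hmfin))
      hhmeas.aestronglyMeasurable (Filter.Eventually.of_forall fun x => ?_)
    by_cases hx : x ∈ S
    · rw [hhdef, Set.indicator_of_mem hx]
      have hxc : x ∈ {x | c < g' x} := lt_of_lt_of_le hx.1 hx.2.1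
      rw [Set.indicator_of_mem hxc, Real.norm_eq_abs, Real.norm_eq_abs]
      have h1 : |q x| ≤ |F x| + δ := by
        have h2 := hq_close x
        have h3 : |q x| - |F x| ≤ |q x - F x| := abs_sub_abs_le_abs_sub _ _
        rw [abs_sub_comm] at h3
        linarith
      have h2 : |F x| ≤ M := hx.2.1.trans hx.2.2
      have h3 : (0:ℝ) ≤ M + δ := by linarith [lt_of_lt_of_le one_pos hM1]
      rw [abs_of_nonneg h3]
      linarith
    · rw [hhdef, Set.indicator_of_notMem hx]
      simp only [norm_zero]
      exact norm_nonneg _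
  -- package h as an element of Gpk
  refine ⟨hhmem.toLp h, ⟨h, ⟨hhmeas, s, hcard, hmem⟩, hhmem.coeFn_toLp⟩, ?_⟩
  -- the key pointwise bound
  have key : ∀ x, (‖F x - h x‖₊ : ℝ≥0∞) ^ p ≤
      ({x | g' x < |F x|}.indicator (fun x => ENNReal.ofReal (|F x| ^ p)) x)
      + ENNReal.ofReal (min (max (g' x) 0) c ^ p)
      + ({x | M < g' x}.indicator G x)
      + ({x | c < g' x}.indicator (fun _ => ENNReal.ofReal (δ ^ p)) x) := by
    intro x
    have hnn : (‖F x - h x‖₊ : ℝ≥0∞) ^ p = ENNReal.ofReal (|F x - h x| ^ p) := by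
      rw [← enorm_eq_nnnorm, ← ofReal_norm, Real.norm_eq_abs,
        ENNReal.ofReal_rpow_of_nonneg (abs_nonneg _) hp0.le]
    by_cases hx : x ∈ S
    · have hh : h x = q x := Set.indicator_of_mem hx _
      have hxc : x ∈ {x | c < g' x} := lt_of_lt_of_le hx.1 hx.2.1
      calc (‖F x - h x‖₊ : ℝ≥0∞) ^ p
          ≤ {x | c < g' x}.indicator (fun _ => ENNReal.ofReal (δ ^ p)) x := by
            rw [hnn, Set.indicator_of_mem hxc]
            exact ENNReal.ofReal_le_ofReal
              (Real.rpow_le_rpow (abs_nonneg _) (hh ▸ hq_close x) hp0.le)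
        _ ≤ _ := le_add_self
    · have hh : h x = 0 := Set.indicator_of_notMem hx _
      rw [hh, sub_zero] at hnn ⊢
      rcases lt_or_ge (g' x) (|F x|) with hcase | hcase
      · calc (‖F x‖₊ : ℝ≥0∞) ^ p
            = {x | g' x < |F x|}.indicator (fun x => ENNReal.ofReal (|F x| ^ p)) x := by
              rw [hnn, Set.indicator_of_mem (show x ∈ {x | g' x < |F x|} from hcase) (fun x => ENNReal.ofReal (|F x| ^ p))]
          _ ≤ _ := le_add_right (le_add_right (le_add_right le_rfl))
      · by_cases h1 : c < |F x|
        · have hM : M < g' x := by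
            by_contra hM'
            exact hx ⟨h1, hcase, not_lt.mp hM'⟩
          calc (‖F x‖₊ : ℝ≥0∞) ^ p
              ≤ {x | M < g' x}.indicator G x := by
                rw [hnn, Set.indicator_of_mem (show x ∈ {x | M < g' x} from hM) G]
                have h2 : |F x| ≤ |g' x| := hcase.trans (le_abs_self _)
                calc ENNReal.ofReal (|F x| ^ p)
                    ≤ ENNReal.ofReal (|g' x| ^ p) :=
                      ENNReal.ofReal_le_ofReal (Real.rpow_le_rpow (abs_nonneg _) h2 hp0.le)
                  _ = ENNReal.ofReal |g' x| ^ p :=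
                      (ENNReal.ofReal_rpow_of_nonneg (abs_nonneg _) hp0.le).symm
                  _ = G x := by rw [hGdef, ← Real.norm_eq_abs, ofReal_norm, enorm_eq_nnnorm]
            _ ≤ _ := le_add_right (le_add_self)
        · have h2 : |F x| ≤ min (max (g' x) 0) c :=
            le_min (hcase.trans (le_max_left _ _)) (not_lt.mp h1)
          calc (‖F x‖₊ : ℝ≥0∞) ^ p
              ≤ ENNReal.ofReal (min (max (g' x) 0) c ^ p) := by
                rw [hnn]
                exact ENNReal.ofReal_le_ofReal
                  (Real.rpow_le_rpow (abs_nonneg _) h2 hp0.le)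
            _ ≤ _ := le_add_right (le_add_right le_add_self)
  -- integral bounds
  have hm1 : Measurable fun x =>
      ({x | g' x < |F x|}.indicator (fun x => ENNReal.ofReal (|F x| ^ p)) x) :=
    (ENNReal.measurable_ofReal.comp (hFmeas.abs.pow measurable_const)).indicator
      (measurableSet_lt hg'meas hFmeas.abs)
  have hm2 : Measurable fun x => ENNReal.ofReal (min (max (g' x) 0) c ^ p) :=
    ENNReal.measurable_ofReal.comp
      (((hg'meas.max measurable_const).min measurable_const).pow measurable_const)
  have hm3 : Measurable fun x => ({x | M < g' x}.indicator G x) :=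
    hGmeas.indicator (measurableSet_lt measurable_const hg'meas)
  have hm4 : Measurable fun x =>
      ({x | c < g' x}.indicator (fun _ => ENNReal.ofReal (δ ^ p)) x) :=
    measurable_const.indicator (measurableSet_lt measurable_const hg'meas)
  have hT1 : ∫⁻ x, {x | g' x < |F x|}.indicator (fun x => ENNReal.ofReal (|F x| ^ p)) x ∂μ
      ≤ η/4 := by
    have hA : MeasurableSet {x | g' x < |F x|} := measurableSet_lt hg'meas hFmeas.abs
    rw [lintegral_indicator hA]
    have hint : Integrable (fun x => |F x| ^ p) μ := by
      have h0 := (Lp.memLp f).integrable_norm_rpow hP0 hPtop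
      rw [hPt] at h0
      refine h0.congr ?_
      filter_upwards [hfF] with x hx
      rw [Real.norm_eq_abs, hx]
    have heq : ∫⁻ x in {x | g' x < |F x|}, ENNReal.ofReal (|F x| ^ p) ∂μ
        = ENNReal.ofReal (∫ x in {x | g' x < |F x|}, |F x| ^ p ∂μ) :=
      (ofReal_integral_eq_lintegral_ofReal hint.integrableOn
        (Filter.Eventually.of_forall fun x => by positivity)).symm
    rw [heq]
    have hset : {x | g' x < |F x|} =ᵐ[μ] {x | g x < |(f : Ω → ℝ) x|} := by
      refine Filter.eventuallyEq_set.mpr ?_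
      filter_upwards [hgg', hfF] with x h1 h2
      simp only [Set.mem_setOf_eq, h1, h2]
    have heq2 : ∫ x in {x | g' x < |F x|}, |F x| ^ p ∂μ
        = ∫ x in {x | g x < |(f : Ω → ℝ) x|}, |(f : Ω → ℝ) x| ^ p ∂μ := by
      rw [Measure.restrict_congr_set hset]
      refine integral_congr_ae ?_
      filter_upwards [ae_restrict_of_ae hfF] with x hx
      rw [hx]
    rw [heq2]
    exact (ENNReal.ofReal_le_ofReal (hgtail f hf)).trans hofε1.le
  have hT4 : ∫⁻ x, {x | c < g' x}.indicator (fun _ => ENNReal.ofReal (δ ^ p)) x ∂μ ≤ η/4 := by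
    rw [lintegral_indicator_const (measurableSet_lt measurable_const hg'meas)]
    exact hδsmall
  -- put the bounds together
  have htotal : ∫⁻ x, (‖F x - h x‖₊ : ℝ≥0∞) ^ p ∂μ ≤ η := by
    calc ∫⁻ x, (‖F x - h x‖₊ : ℝ≥0∞) ^ p ∂μ
        ≤ ∫⁻ x, (({x | g' x < |F x|}.indicator (fun x => ENNReal.ofReal (|F x| ^ p)) x)
            + ENNReal.ofReal (min (max (g' x) 0) c ^ p)
            + ({x | M < g' x}.indicator G x)
            + ({x | c < g' x}.indicator (fun _ => ENNReal.ofReal (δ ^ p)) x)) ∂μ :=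
          lintegral_mono key
      _ = (∫⁻ x, ({x | g' x < |F x|}.indicator (fun x => ENNReal.ofReal (|F x| ^ p)) x) ∂μ)
            + (∫⁻ x, ENNReal.ofReal (min (max (g' x) 0) c ^ p) ∂μ)
            + (∫⁻ x, ({x | M < g' x}.indicator G x) ∂μ)
            + (∫⁻ x, ({x | c < g' x}.indicator (fun _ => ENNReal.ofReal (δ ^ p)) x) ∂μ) := by
          rw [lintegral_add_left (by exact (hm1.add hm2).add hm3 : Measurable fun x => _ + _ + _),
            lintegral_add_left (by exact hm1.add hm2 : Measurable fun x => _ + _), lintegral_add_left hm1]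
      _ ≤ η/4 + η/4 + η/4 + η/4 :=
          add_le_add (add_le_add (add_le_add hT1 hctail) hMtail) hT4
      _ = 4 * (η/4) := by ring
      _ = η := ENNReal.mul_div_cancel (by norm_num) (by norm_num)
  -- conclude
  have hae : ((f - hhmem.toLp h : Lp ℝ (ENNReal.ofReal p) μ) : Ω → ℝ)
      =ᵐ[μ] fun x => F x - h x := by
    filter_upwards [Lp.coeFn_sub f (hhmem.toLp h), hfF, hhmem.coeFn_toLp] with x h1 h2 h3
    rw [h1, Pi.sub_apply, h2, h3]
  have hfin : eLpNorm ((f - hhmem.toLp h : Lp ℝ (ENNReal.ofReal p) μ) : Ω → ℝ)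
      (ENNReal.ofReal p) μ ≤ ENNReal.ofReal ε := by
    rw [eLpNorm_congr_ae hae, eLpNorm_eq_lintegral_rpow_enorm_toReal hP0 hPtop, hPt]
    refine le_trans (ENNReal.rpow_le_rpow htotal (by positivity : (0:ℝ) ≤ 1/p)) ?_
    rw [hηdef, ← ENNReal.rpow_mul, mul_one_div_cancel hp0.ne', ENNReal.rpow_one]
  rw [Lp.norm_def]
  calc (eLpNorm ((f - hhmem.toLp h : Lp ℝ (ENNReal.ofReal p) μ) : Ω → ℝ)
        (ENNReal.ofReal p) μ).toReal
      ≤ (ENNReal.ofReal ε).toReal := ENNReal.toReal_mono ENNReal.ofReal_ne_top hfin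
    _ = ε := ENNReal.toReal_ofReal hε.le
end

section
/- Let (Ω,𝓕,μ) be a measure space and p ∈ [1,∞]. If 𝒜 ⊂ L^p is totally bounded, then 𝒜 is uniformly approximable: for every ε > 0 there exists k such that every f ∈ 𝒜 is within ε in L^p norm of a simple function taking at most k values. -/
open MeasureTheory ENNReal Filter Topology

variable {Ω : Type*} [MeasurableSpace Ω]

lemma Gpk_mono (p : ℝ≥0∞) (μ : MeasureTheory.Measure Ω) {k₁ k₂ : ℕ} (hk : k₁ ≤ k₂) :
    Gpk p μ k₁ ⊆ Gpk p μ k₂ := by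
  rintro f ⟨g, ⟨hgm, s, hs, hmem⟩, hae⟩
  exact ⟨g, ⟨hgm, s, hs.trans hk, hmem⟩, hae⟩

lemma floor_mul_bounds {ε : ℝ} (hε : 0 < ε) (y : ℝ) :
    y - ε < ε * ⌊y / ε⌋ ∧ ε * ⌊y / ε⌋ ≤ y := by
  have h1 : (⌊y / ε⌋ : ℝ) ≤ y / ε := Int.floor_le _
  have h2 : y / ε < ⌊y / ε⌋ + 1 := Int.lt_floor_add_one _
  constructor
  · nlinarith [mul_lt_mul_of_pos_left h2 hε, mul_div_cancel₀ y hε.ne']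
  · nlinarith [mul_le_mul_of_nonneg_left h1 hε.le, mul_div_cancel₀ y hε.ne']

/-- Single-function approximation: every element of `L^p` is within `ε` of some `Gpk`. -/
lemma exists_mem_Gpk (μ : MeasureTheory.Measure Ω) (p : ℝ≥0∞) [Fact (1 ≤ p)]
    (f : Lp ℝ p μ) {ε : ℝ} (hε : 0 < ε) :
    ∃ k : ℕ, ∃ g ∈ Gpk p μ k, ‖f - g‖ ≤ ε := by
  by_cases hp : p = ∞
  · -- p = ∞: round the function to a grid of mesh ε.
    subst hp
    set C : ℝ := ‖f‖ with hC
    have hC0 : 0 ≤ C := norm_nonneg _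
    have hmk := (Lp.aestronglyMeasurable f).stronglyMeasurable_mk
    set f' : Ω → ℝ := (Lp.aestronglyMeasurable f).mk _ with hf'
    have hf'm : Measurable f' := hmk.measurable
    have hf'ae : (f : Ω → ℝ) =ᵐ[μ] f' := (Lp.aestronglyMeasurable f).ae_eq_mk
    set g : Ω → ℝ := fun x => ε * ⌊(max (-C) (min C (f' x))) / ε⌋ with hg
    have hgm : Measurable g := by
      apply measurable_const.mul
      exact measurable_from_top.comp (Measurable.floor
        ((measurable_const.max (measurable_const.min hf'm)).div measurable_const))
    have hval : ∀ x, g x ∈ (Finset.Icc ⌊(-C) / ε⌋ ⌊C / ε⌋).image (fun n : ℤ => ε * n) := by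
      intro x
      refine Finset.mem_image.mpr ⟨⌊(max (-C) (min C (f' x))) / ε⌋, ?_, rfl⟩
      have h1 : -C ≤ max (-C) (min C (f' x)) := le_max_left _ _
      have h2 : max (-C) (min C (f' x)) ≤ C := max_le (neg_le_self hC0) (min_le_left _ _)
      exact Finset.mem_Icc.mpr ⟨Int.floor_le_floor (div_le_div_of_nonneg_right h1 hε.le),
        Int.floor_le_floor (div_le_div_of_nonneg_right h2 hε.le)⟩
    -- a.e. bound |f - g| ≤ ε
    have hbd : ∀ᵐ x ∂μ, ‖(f : Ω → ℝ) x - g x‖ ≤ ε := by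
      have hnorm : ∀ᵐ x ∂μ, ‖(f : Ω → ℝ) x‖ ≤ C := by
        have h := enorm_ae_le_eLpNormEssSup (f : Ω → ℝ) μ
        filter_upwards [h] with x hx
        have hfin : eLpNorm (f : Ω → ℝ) ∞ μ ≠ ∞ := Lp.eLpNorm_ne_top f
        have : (‖(f : Ω → ℝ) x‖₊ : ℝ≥0∞) ≤ eLpNorm (f : Ω → ℝ) ∞ μ := by
          simpa [eLpNorm_exponent_top, enorm_eq_nnnorm] using hx
        have := ENNReal.toReal_mono hfin this
        simpa [hC, Lp.norm_def] using this
      filter_upwards [hnorm, hf'ae] with x hx hxe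
      have habs : |f' x| ≤ C := by rw [← hxe]; simpa [Real.norm_eq_abs] using hx
      have habs' := abs_le.mp habs
      have hyx : max (-C) (min C (f' x)) = f' x := by
        rw [min_eq_right habs'.2, max_eq_right habs'.1]
      have hb := floor_mul_bounds hε (f' x)
      rw [Real.norm_eq_abs, abs_le]
      constructor
      · simp only [hg, hyx]; rw [hxe]; linarith [hb.2]
      · simp only [hg, hyx]; rw [hxe]; linarith [hb.1]
    have hgmem : MemLp g ∞ μ := by
      refine memLp_top_of_bound hgm.aestronglyMeasurable (C + ε) (ae_of_all _ fun x => ?_)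
      have h1 : -C ≤ max (-C) (min C (f' x)) := le_max_left _ _
      have h2 : max (-C) (min C (f' x)) ≤ C := max_le (neg_le_self hC0) (min_le_left _ _)
      have hb := floor_mul_bounds hε (max (-C) (min C (f' x)))
      rw [Real.norm_eq_abs, abs_le]
      constructor <;> simp only [hg] <;> [linarith [hb.1]; linarith [hb.2]]
    refine ⟨((Finset.Icc ⌊(-C) / ε⌋ ⌊C / ε⌋).image (fun n : ℤ => ε * n)).card,
      hgmem.toLp g, ⟨g, ⟨hgm, _, le_rfl, hval⟩, hgmem.coeFn_toLp⟩, ?_⟩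
    have hsub : ((f - hgmem.toLp g : Lp ℝ ∞ μ) : Ω → ℝ) =ᵐ[μ] fun x => (f : Ω → ℝ) x - g x := by
      filter_upwards [Lp.coeFn_sub f (hgmem.toLp g), hgmem.coeFn_toLp] with x h1 h2
      rw [h1, Pi.sub_apply, h2]
    rw [Lp.norm_def]
    have : eLpNorm ((f - hgmem.toLp g : Lp ℝ ∞ μ) : Ω → ℝ) ∞ μ ≤ ENNReal.ofReal ε := by
      rw [eLpNorm_congr_ae hsub, eLpNorm_exponent_top]
      exact eLpNormEssSup_le_of_ae_bound hbd
    calc (eLpNorm ((f - hgmem.toLp g : Lp ℝ ∞ μ) : Ω → ℝ) ∞ μ).toReal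
        ≤ (ENNReal.ofReal ε).toReal := ENNReal.toReal_mono ENNReal.ofReal_ne_top this
      _ = ε := ENNReal.toReal_ofReal hε.le
  · -- p ≠ ∞: simple functions are dense.
    have hd := Lp.simpleFunc.dense (E := ℝ) (p := p) (μ := μ) hp
    have hmem : f ∈ closure (Lp.simpleFunc ℝ p μ : Set (Lp ℝ p μ)) := hd f
    obtain ⟨b, hb, hdist⟩ := Metric.mem_closure_iff.mp hmem ε hε
    obtain ⟨s, rfl⟩ : ∃ s : Lp.simpleFunc ℝ p μ, (s : Lp ℝ p μ) = b := ⟨⟨b, hb⟩, rfl⟩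
    set sf := Lp.simpleFunc.toSimpleFunc s with hsf
    refine ⟨sf.range.card, (s : Lp ℝ p μ), ⟨sf, ⟨sf.measurable, sf.range, le_rfl,
      fun x => sf.mem_range_self x⟩, (Lp.simpleFunc.toSimpleFunc_eq_toFun s).symm⟩, ?_⟩
    rw [← dist_eq_norm]
    exact hdist.le

theorem totallyBounded_implies_uniformlyApproximable (μ : MeasureTheory.Measure Ω)
    (p : ℝ≥0∞) [Fact (1 ≤ p)] (𝒜 : Set (Lp ℝ p μ)) (h : TotallyBounded 𝒜) :
    ∀ ε > (0 : ℝ), ∃ k : ℕ, ∀ f ∈ 𝒜, ∃ g ∈ Gpk p μ k, ‖f - g‖ ≤ ε := by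
  intro ε hε
  obtain ⟨t, htfin, hcov⟩ := (Metric.totallyBounded_iff.mp h) (ε / 2) (by linarith)
  have hchoice : ∀ y : Lp ℝ p μ, ∃ k : ℕ, ∃ g ∈ Gpk p μ k, ‖y - g‖ ≤ ε / 2 :=
    fun y => exists_mem_Gpk μ p y (by linarith)
  choose K G hG hGnorm using hchoice
  have : ∃ k : ℕ, ∀ y ∈ t, K y ≤ k := by
    refine ⟨htfin.toFinset.sup K, fun y hy => Finset.le_sup ?_⟩
    simpa using hy
  obtain ⟨k, hk⟩ := this
  refine ⟨k, fun f hf => ?_⟩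
  obtain ⟨y, hy, hfy⟩ := Set.mem_iUnion₂.mp (hcov hf)
  refine ⟨G y, Gpk_mono p μ (hk y hy) (hG y), ?_⟩
  calc ‖f - G y‖ = ‖(f - y) + (y - G y)‖ := by rw [sub_add_sub_cancel]
    _ ≤ ‖f - y‖ + ‖y - G y‖ := norm_add_le _ _
    _ ≤ ε / 2 + ε / 2 := by
        refine add_le_add ?_ (hGnorm y)
        rw [← dist_eq_norm]
        exact (Metric.mem_ball.mp hfy).le
    _ = ε := by ring
end

section
/- Let (Ω,𝓕,μ) be a measure space and 𝒜 ⊂ L^∞(Ω,𝓕,μ). Then 𝒜 is uniformly approximable in L^∞ if and only if for every ε > 0, sup_{f∈𝒜} 𝒩(f,ε) < ∞, where 𝒩(f,ε) is the infimum over measurable g = f a.e. of the minimal number of closed intervals of radius ε needed to cover g(Ω). Moreover N_{∞,ε}(𝒜) = sup_{f∈𝒜} 𝒩(f,ε) for all ε > 0. -/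
open MeasureTheory ENNReal Filter Topology

variable {Ω : Type*} [MeasurableSpace Ω]

/-- `N_{∞,ε}(𝒜)` as an extended natural number: the least `k` such that every `f ∈ 𝒜`
is within `ε` in `L^∞` of a simple function taking at most `k` values (`⊤` if none). -/
noncomputable def NinfE (μ : MeasureTheory.Measure Ω) (𝒜 : Set (Lp ℝ ⊤ μ)) (ε : ℝ) : ℕ∞ :=
  sInf {n : ℕ∞ | ∃ k : ℕ, n = (k : ℕ∞) ∧ ∀ f ∈ 𝒜, ∃ h ∈ Gpk ⊤ μ k, ‖f - h‖ ≤ ε}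

/-- `𝒩(f,ε)`: the infimum over measurable representatives `g = f` a.e. of the minimal number
of closed balls of radius `ε` needed to cover the range of `g` (`⊤` if none). -/
noncomputable def covN (μ : MeasureTheory.Measure Ω) (f : Ω → ℝ) (ε : ℝ) : ℕ∞ :=
  sInf {n : ℕ∞ | ∃ k : ℕ, n = (k : ℕ∞) ∧ ∃ g : Ω → ℝ, Measurable g ∧ f =ᵐ[μ] g ∧
    ∃ t : Finset ℝ, t.card ≤ k ∧ ∀ x, ∃ c ∈ t, |g x - c| ≤ ε}

/-- If a set of codes is of the form `{↑k | Q k}` with `Q` monotone, then `sInf ≤ n` iff `Q n`. -/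
lemma sInf_coe_le_iff (Q : ℕ → Prop) (hQ : ∀ ⦃k k'⦄, k ≤ k' → Q k → Q k') (n : ℕ) :
    sInf {m : ℕ∞ | ∃ k : ℕ, m = (k : ℕ∞) ∧ Q k} ≤ (n : ℕ∞) ↔ Q n := by
  constructor
  · intro h
    have hlt : sInf {m : ℕ∞ | ∃ k : ℕ, m = (k : ℕ∞) ∧ Q k} < ((n + 1 : ℕ) : ℕ∞) :=
      lt_of_le_of_lt h (by exact_mod_cast Nat.lt_succ_self n)
    obtain ⟨m, hm, hmlt⟩ := sInf_lt_iff.mp hlt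
    obtain ⟨k, rfl, hk⟩ := hm
    exact hQ (by exact_mod_cast Nat.lt_succ_iff.mp (by exact_mod_cast hmlt)) hk
  · intro h
    exact sInf_le ⟨n, rfl, h⟩

/-- From a finite `ε`-cover of the range of a measurable `g`, construct a measurable
selector function. -/
lemma exists_selector (g : Ω → ℝ) (hg : Measurable g) (ε : ℝ) (t : Finset ℝ) :
    ∃ h : Ω → ℝ, Measurable h ∧ (∀ x, h x ∈ t ∨ h x = 0) ∧
      ∀ x, (∃ c ∈ t, |g x - c| ≤ ε) → (h x ∈ t ∧ |g x - h x| ≤ ε) := by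
  classical
  induction t using Finset.induction with
  | empty =>
    exact ⟨fun _ => 0, measurable_const, fun x => Or.inr rfl, fun x hx => by simpa using hx⟩
  | @insert a s ha ih =>
    obtain ⟨h, hmeas, hval, hcov⟩ := ih
    refine ⟨fun x => if |g x - a| ≤ ε then a else h x, ?_, ?_, ?_⟩
    · exact Measurable.ite
        (measurableSet_le ((hg.sub measurable_const).abs) measurable_const)
        measurable_const hmeas
    · intro x
      by_cases hx : |g x - a| ≤ ε
      · simp [hx]
      · simp only [hx, if_false]
        rcases hval x with h1 | h1
        · exact Or.inl (Finset.mem_insert_of_mem h1)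
        · exact Or.inr h1
    · intro x hx
      by_cases hxa : |g x - a| ≤ ε
      · simp [hxa, Finset.mem_insert_self]
      · simp only [hxa, if_false]
        obtain ⟨c, hc, hcd⟩ := hx
        rcases Finset.mem_insert.mp hc with rfl | hc
        · exact absurd hcd hxa
        · obtain ⟨h1, h2⟩ := hcov x ⟨c, hc, hcd⟩
          exact ⟨Finset.mem_insert_of_mem h1, h2⟩

lemma norm_le_of_ae_bound' {μ : MeasureTheory.Measure Ω} {f : Lp ℝ ⊤ μ} {ε : ℝ} (hε : 0 ≤ ε)
    (hb : ∀ᵐ x ∂μ, |(f : Ω → ℝ) x| ≤ ε) : ‖f‖ ≤ ε := by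
  rw [Lp.norm_def]
  refine ENNReal.toReal_le_of_le_ofReal hε ?_
  rw [eLpNorm_exponent_top]
  exact eLpNormEssSup_le_of_ae_bound (by simpa [Real.norm_eq_abs] using hb)

lemma ae_bound_of_norm_le {μ : MeasureTheory.Measure Ω} {f : Lp ℝ ⊤ μ} {ε : ℝ}
    (hb : ‖f‖ ≤ ε) : ∀ᵐ x ∂μ, |(f : Ω → ℝ) x| ≤ ε := by
  have hne : eLpNorm (f : Ω → ℝ) ⊤ μ ≠ ⊤ := Lp.eLpNorm_ne_top f
  have h1 : eLpNorm (f : Ω → ℝ) ⊤ μ ≤ ENNReal.ofReal ε := by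
    rw [Lp.norm_def] at hb
    rw [← ENNReal.ofReal_toReal hne]
    exact ENNReal.ofReal_le_ofReal hb
  rw [eLpNorm_exponent_top] at h1
  filter_upwards [ae_le_eLpNormEssSup (f := (f : Ω → ℝ)) (μ := μ)] with x hx
  have h2 : (‖(f : Ω → ℝ) x‖₊ : ℝ≥0∞) ≤ ENNReal.ofReal ε := le_trans hx h1
  have hε : 0 ≤ ε := le_trans (norm_nonneg f) hb
  rw [← enorm_eq_nnnorm, ← ofReal_norm] at h2
  have h3 : ‖(f : Ω → ℝ) x‖ ≤ ε := (ENNReal.ofReal_le_ofReal_iff hε).mp h2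
  simpa [Real.norm_eq_abs] using h3

theorem uniformlyApproximable_iff_coveringNumbers (μ : MeasureTheory.Measure Ω)
    (𝒜 : Set (Lp ℝ ⊤ μ)) :
    ((∀ ε > (0 : ℝ), NinfE μ 𝒜 ε < ⊤) ↔
      (∀ ε > (0 : ℝ), (⨆ f ∈ 𝒜, covN μ (f : Ω → ℝ) ε) < ⊤)) ∧
    (∀ ε > (0 : ℝ), NinfE μ 𝒜 ε = ⨆ f ∈ 𝒜, covN μ (f : Ω → ℝ) ε) := by
  classical
  have key : ∀ ε > (0 : ℝ), NinfE μ 𝒜 ε = ⨆ f ∈ 𝒜, covN μ (f : Ω → ℝ) ε := by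
    intro ε hε
    apply le_antisymm
    · -- NinfE ≤ sup
      rcases eq_or_ne (⨆ f ∈ 𝒜, covN μ (f : Ω → ℝ) ε) ⊤ with htop | htop
      · rw [htop]; exact le_top
      obtain ⟨n, hn⟩ := WithTop.ne_top_iff_exists.mp htop
      refine le_trans (sInf_le ⟨n, rfl, ?_⟩) (le_of_eq hn)
      intro f hf
      have hle : covN μ (f : Ω → ℝ) ε ≤ (n : ℕ∞) := by
        refine le_trans ?_ (le_of_eq hn.symm)
        exact le_iSup_of_le f (le_iSup_of_le hf le_rfl)
      have hQ : ∃ g : Ω → ℝ, Measurable g ∧ (f : Ω → ℝ) =ᵐ[μ] g ∧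
          ∃ t : Finset ℝ, t.card ≤ n ∧ ∀ x, ∃ c ∈ t, |g x - c| ≤ ε := by
        refine (sInf_coe_le_iff _ ?_ n).mp hle
        rintro k k' hkk' ⟨g, hgm, hfg, t, htc, hcov⟩
        exact ⟨g, hgm, hfg, t, htc.trans hkk', hcov⟩
      obtain ⟨g, hgm, hfg, t, htc, hcov⟩ := hQ
      obtain ⟨h, hhm, hval, hsel⟩ := exists_selector g hgm ε t
      have hmem : MemLp h ⊤ μ := by
        refine memLp_top_of_bound hhm.aestronglyMeasurable (∑ c ∈ t, |c|)
          (Filter.Eventually.of_forall fun x => ?_)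
        rw [Real.norm_eq_abs]
        exact Finset.single_le_sum (fun c _ => abs_nonneg c) (hsel x (hcov x)).1
      refine ⟨hmem.toLp h, ⟨h, ⟨hhm, t, htc, fun x => (hsel x (hcov x)).1⟩,
        hmem.coeFn_toLp⟩, ?_⟩
      refine norm_le_of_ae_bound' (le_of_lt hε) ?_
      filter_upwards [Lp.coeFn_sub f (hmem.toLp h), hmem.coeFn_toLp, hfg] with x h1 h2 h3
      rw [h1]
      simp only [Pi.sub_apply, h2, h3]
      exact (hsel x (hcov x)).2
    · -- sup ≤ NinfE
      refine le_sInf ?_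
      rintro b ⟨k, rfl, hP⟩
      refine iSup₂_le fun f hf => ?_
      obtain ⟨h, ⟨g, ⟨hgm, s, hsc, hgs⟩, hhg⟩, hnorm⟩ := hP f hf
      have hae : ∀ᵐ x ∂μ, |(f : Ω → ℝ) x - g x| ≤ ε := by
        filter_upwards [ae_bound_of_norm_le hnorm, Lp.coeFn_sub f h, hhg] with x h1 h2 h3
        rw [h2] at h1
        simpa [h3] using h1
      set f' := (Lp.aestronglyMeasurable f).mk _ with hf'def
      have hf'm : Measurable f' := (Lp.aestronglyMeasurable f).stronglyMeasurable_mk.measurable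
      have hff' : (f : Ω → ℝ) =ᵐ[μ] f' := (Lp.aestronglyMeasurable f).ae_eq_mk
      refine sInf_le ⟨k, rfl, fun x => if |f' x - g x| ≤ ε then f' x else g x, ?_, ?_, s, hsc, ?_⟩
      · exact Measurable.ite
          (measurableSet_le ((hf'm.sub hgm).abs) measurable_const) hf'm hgm
      · filter_upwards [hff', hae] with x h1 h2
        rw [h1] at h2
        rw [h1, if_pos h2]
      · intro x
        refine ⟨g x, hgs x, ?_⟩
        by_cases hx : |f' x - g x| ≤ ε
        · simpa [hx] using hx
        · simpa [hx] using le_of_lt hε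
  exact ⟨⟨fun H ε hε => by rw [← key ε hε]; exact H ε hε,
    fun H ε hε => by rw [key ε hε]; exact H ε hε⟩, key⟩
end

section
/- Let (Ω,𝓕,μ) be a measure space and p ∈ [1,∞). If μ has a sequence (A_n) of pairwise disjoint measurable sets of positive measure with μ(A_n) → 0, then the closed unit ball of L^p(Ω,𝓕,μ) is not uniformly approximable; in fact for all k ≥ 1, sup over nonzero f ∈ L^p of inf_{h ∈ 𝒢_{p,k}} ‖f−h‖_p^p / ‖f‖_p^p = 1. -/
open MeasureTheory ENNReal Filter Topology

variable {Ω : Type*} [MeasurableSpace Ω]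

lemma norm_rpow_helper (μ : Measure Ω) (p : ℝ≥0∞) (hp0 : p ≠ 0) (hp : p ≠ ∞) (G : Ω → ℝ) :
    (eLpNorm G p μ).toReal ^ p.toReal
      = (∫⁻ a, (‖G a‖₊ : ℝ≥0∞) ^ p.toReal ∂μ).toReal := by
  have hq0 : p.toReal ≠ 0 := by
    simp [ENNReal.toReal_eq_zero_iff, hp0, hp]
  rw [eLpNorm_eq_lintegral_rpow_enorm_toReal hp0 hp]; simp only [enorm_eq_nnnorm]; rw [ENNReal.toReal_rpow, ← ENNReal.rpow_mul,
    one_div_mul_cancel hq0, ENNReal.rpow_one]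

lemma exists_good_seq (μ : Measure Ω) (A : ℕ → Set Ω) (hpos : ∀ n, 0 < μ (A n))
    (hto0 : Tendsto (fun n => μ (A n)) atTop (𝓝 0)) (r : ℝ≥0∞) (hr : r ≠ 0) :
    ∃ n : ℕ → ℕ, StrictMono n ∧ μ (A (n 0)) < 1 ∧
      ∀ i, μ (A (n (i + 1))) ≤ μ (A (n i)) * r := by
  have hev : ∀ b : ℝ≥0∞, b ≠ 0 → ∀ N₀ : ℕ, ∃ m : ℕ, N₀ < m ∧ μ (A m) < b := by
    intro b hb N₀
    have h1 : ∀ᶠ m in atTop, μ (A m) < b := hto0.eventually_lt_const (pos_iff_ne_zero.mpr hb)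
    exact ((h1.and (eventually_gt_atTop N₀)).exists).imp fun m hm => ⟨hm.2, hm.1⟩
  choose sel hsel1 hsel2 using hev
  refine ⟨fun i => Nat.rec (sel 1 one_ne_zero 0)
      (fun _ prev => sel (μ (A prev) * r) (by
        exact (ENNReal.mul_pos (hpos prev).ne' hr).ne') prev) i, ?_, ?_, ?_⟩
  · apply strictMono_nat_of_lt_succ
    intro i
    exact hsel1 _ _ _
  · exact hsel2 _ _ _
  · intro i
    exact (hsel2 _ _ _).le

lemma key_construction (μ : MeasureTheory.Measure Ω)
    (p : ℝ≥0∞) [Fact (1 ≤ p)] (hp : p ≠ ∞)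
    (A : ℕ → Set Ω) (hmeas : ∀ n, MeasurableSet (A n))
    (hdisj : Pairwise (Function.onFun Disjoint A)) (hpos : ∀ n, 0 < μ (A n))
    (hto0 : Tendsto (fun n => μ (A n)) atTop (𝓝 0))
    (k N : ℕ) (hkN : k < N) (δ : ℝ) (hδ0 : 0 < δ) (hδ1 : δ < 1) :
    ∃ f : Lp ℝ p μ, f ≠ 0 ∧ ∀ h ∈ Gpk p μ k,
      ((1 - δ) ^ p.toReal * (((N - k : ℕ) : ℝ) / N)) * ‖f‖ ^ p.toReal
        ≤ ‖f - h‖ ^ p.toReal := by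
  classical
  have hp1 : 1 ≤ p := Fact.out
  have hp0 : p ≠ 0 := by
    intro h0; rw [h0] at hp1; simp at hp1
  set q : ℝ := p.toReal with hqdef
  have hq1 : 1 ≤ q := by
    have := ENNReal.toReal_mono hp hp1
    simpa using this
  have hq0 : 0 < q := lt_of_lt_of_le one_pos hq1
  -- geometric ratio
  set R : ℝ := (2 - δ) / δ with hRdef
  have hR1 : 1 < R := (one_lt_div hδ0).mpr (by linarith)
  have hR0 : 0 < R := lt_trans one_pos hR1
  have hRq0 : 0 < R ^ q := Real.rpow_pos_of_pos hR0 q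
  -- choose the sets
  obtain ⟨n, hnmono, hn1, hnrec⟩ := exists_good_seq μ A hpos hto0
    (ENNReal.ofReal (R ^ q)⁻¹) (by simp [ENNReal.ofReal_pos.mpr (inv_pos.mpr hRq0), ne_of_gt])
  set B : ℕ → Set Ω := fun i => A (n i) with hBdef
  have hBmeas : ∀ i, MeasurableSet (B i) := fun i => hmeas _
  have hBdisj : ∀ {i j : ℕ}, i ≠ j → Disjoint (B i) (B j) :=
    fun {i j} hij => hdisj (hnmono.injective.ne hij)
  have hBpos : ∀ i, 0 < μ (B i) := fun i => hpos _
  have hBfin : ∀ i, μ (B i) < ∞ := by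
    intro i
    induction i with
    | zero => exact lt_trans hn1 (by simp)
    | succ i ih =>
      refine lt_of_le_of_lt (hnrec i) ?_
      exact ENNReal.mul_lt_top ih ofReal_lt_top
  set v : ℕ → ℝ := fun i => (μ (B i)).toReal with hvdef
  have hv : ∀ i, 0 < v i := fun i => ENNReal.toReal_pos (hBpos i).ne' (hBfin i).ne
  have hvrec : ∀ i, v (i + 1) ≤ v i * (R ^ q)⁻¹ := by
    intro i
    have := ENNReal.toReal_mono (by
      exact ENNReal.mul_ne_top (hBfin i).ne ofReal_ne_top) (hnrec i)
    rwa [ENNReal.toReal_mul, ENNReal.toReal_ofReal (inv_pos.mpr hRq0).le] at this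
  set c : ℕ → ℝ := fun i => (v 0 / v i) ^ (1 / q) with hcdef
  have hc : ∀ i, 0 < c i := fun i => Real.rpow_pos_of_pos (div_pos (hv 0) (hv i)) _
  have hcq : ∀ i, c i ^ q = v 0 / v i := by
    intro i
    show ((v 0 / v i) ^ (1 / q)) ^ q = v 0 / v i
    rw [← Real.rpow_mul (div_pos (hv 0) (hv i)).le, one_div_mul_cancel hq0.ne', Real.rpow_one]
  have hcqv : ∀ i, c i ^ q * v i = v 0 := by
    intro i
    rw [hcq i, div_mul_cancel₀ _ (hv i).ne']
  -- growth of c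
  have hcR : ∀ i, R * c i ≤ c (i + 1) := by
    intro i
    have hq' : (0:ℝ) ≤ R * c i := by positivity
    have h1 : (R * c i) ^ q ≤ c (i + 1) ^ q := by
      rw [Real.mul_rpow hR0.le (hc i).le, hcq i, hcq (i + 1)]
      have h2 : v (i + 1) ≤ v i / R ^ q := by
        have := hvrec i
        rwa [div_eq_mul_inv]
      calc R ^ q * (v 0 / v i) = v 0 / (v i / R ^ q) := by
            field_simp
        _ ≤ v 0 / v (i + 1) :=
            div_le_div_of_nonneg_left (hv 0).le (hv (i+1)) h2
    exact (Real.rpow_le_rpow_iff hq' (hc (i+1)).le hq0).mp h1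
  have hcmono : Monotone c := by
    apply monotone_nat_of_le_succ
    intro i
    calc c i ≤ R * c i := le_mul_of_one_le_left (hc i).le hR1.le
      _ ≤ c (i + 1) := hcR i
  have hgap : ∀ i j, i < j → (2 - δ) * c i ≤ δ * c j := by
    intro i j hij
    have h1 : (2 - δ) * c i = δ * (R * c i) := by
      rw [hRdef]; field_simp
    rw [h1]
    have h2 : R * c i ≤ c (i + 1) := hcR i
    have h3 : c (i + 1) ≤ c j := hcmono hij
    nlinarith [hc i]
  -- the function F
  set F : Ω → ℝ := fun x => ∑ i ∈ Finset.range N, Set.indicator (B i) (fun _ => c i) x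
    with hFdef
  have hFx : ∀ i, i ∈ Finset.range N → ∀ x ∈ B i, F x = c i := by
    intro i hi x hx
    simp only [hFdef]
    rw [Finset.sum_eq_single_of_mem i hi]
    · exact Set.indicator_of_mem hx _
    · intro j hj hji
      exact Set.indicator_of_notMem (fun hxj => (hBdisj hji).le_bot ⟨hxj, hx⟩) _
  have hF0 : ∀ x, (∀ i, i ∈ Finset.range N → x ∉ B i) → F x = 0 := by
    intro x hx
    simp only [hFdef]
    exact Finset.sum_eq_zero fun i hi => Set.indicator_of_notMem (hx i hi) _
  have hFmem : MemLp F p μ := by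
    apply memLp_finset_sum
    intro i _
    exact memLp_indicator_const p (hBmeas i) (c i) (Or.inr (hBfin i).ne)
  set f : Lp ℝ p μ := hFmem.toLp F with hfdef
  -- pointwise rpow identity
  have hptF : ∀ x, (‖F x‖₊ : ℝ≥0∞) ^ q
      = ∑ i ∈ Finset.range N, Set.indicator (B i)
          (fun _ => ENNReal.ofReal (c i) ^ q) x := by
    intro x
    by_cases hx : ∃ i ∈ Finset.range N, x ∈ B i
    · obtain ⟨i, hi, hxB⟩ := hx
      rw [hFx i hi x hxB, Finset.sum_eq_single_of_mem i hi]
      · rw [Set.indicator_of_mem hxB, ← enorm_eq_nnnorm, Real.enorm_eq_ofReal (hc i).le]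
      · intro j hj hji
        exact Set.indicator_of_notMem (fun hxj => (hBdisj hji).le_bot ⟨hxj, hxB⟩) _
    · push_neg at hx
      rw [hF0 x hx]
      rw [Finset.sum_eq_zero fun i hi => Set.indicator_of_notMem (hx i hi) _]
      simp [ENNReal.zero_rpow_of_pos hq0]
  -- integral of F
  have hInt : (∫⁻ a, (‖F a‖₊ : ℝ≥0∞) ^ q ∂μ) = N * ENNReal.ofReal (v 0) := by
    simp_rw [hptF]
    rw [lintegral_finset_sum _ (fun i _ => (measurable_const.indicator (hBmeas i)))]
    have hterm : ∀ i, i ∈ Finset.range N →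
        (∫⁻ a, Set.indicator (B i) (fun _ => ENNReal.ofReal (c i) ^ q) a ∂μ)
          = ENNReal.ofReal (v 0) := by
      intro i _
      rw [lintegral_indicator_const (hBmeas i), ENNReal.ofReal_rpow_of_pos (hc i),
        ← ENNReal.ofReal_toReal (hBfin i).ne, ← ENNReal.ofReal_mul (by positivity),
        hcqv i]
    rw [Finset.sum_congr rfl hterm, Finset.sum_const, Finset.card_range, nsmul_eq_mul]
  have hfnorm : ‖f‖ ^ q = (N : ℝ) * v 0 := by
    rw [hfdef, Lp.norm_toLp F hFmem, norm_rpow_helper μ p hp0 hp, hInt,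
      ENNReal.toReal_mul, ENNReal.toReal_natCast, ENNReal.toReal_ofReal (hv 0).le]
  have hN0 : (0:ℝ) < N := by
    exact_mod_cast Nat.pos_of_ne_zero (by omega)
  have hfne : f ≠ 0 := by
    intro hf0
    rw [hf0] at hfnorm
    rw [norm_zero, Real.zero_rpow hq0.ne'] at hfnorm
    nlinarith [hv 0]
  refine ⟨f, hfne, ?_⟩
  rintro h ⟨g, ⟨hgmeas, s, hcard, hgs⟩, hae⟩
  -- the "covered" index set
  set T : Finset ℕ := (Finset.range N).filter
      (fun i => ∃ w ∈ s, |c i - w| < (1 - δ) * c i) with hTdef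
  have hT : T.card ≤ k := by
    have hclaim : ∀ i j : ℕ, i < j → ∀ w : ℝ, |c i - w| < (1 - δ) * c i →
        |c j - w| < (1 - δ) * c j → False := by
      intro i j hij w h1 h2
      rw [abs_lt] at h1 h2
      have hg := hgap i j hij
      nlinarith
    set φ : ℕ → ℝ := fun i =>
      if h : ∃ w ∈ s, |c i - w| < (1 - δ) * c i then h.choose else 0 with hφdef
    have hφmem : ∀ i ∈ T, φ i ∈ s := by
      intro i hi
      rw [hTdef, Finset.mem_filter] at hi
      simp only [hφdef, dif_pos hi.2]
      exact hi.2.choose_spec.1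
    have hφspec : ∀ i ∈ T, |c i - φ i| < (1 - δ) * c i := by
      intro i hi
      rw [hTdef, Finset.mem_filter] at hi
      simp only [hφdef, dif_pos hi.2]
      exact hi.2.choose_spec.2
    have hinj : Set.InjOn φ T := by
      intro i hi j hj hij
      by_contra hne
      rcases lt_or_gt_of_ne hne with h | h
      · exact hclaim i j h (φ i) (hφspec i hi) (hij ▸ hφspec j hj)
      · exact hclaim j i h (φ j) (hφspec j hj) (hij ▸ hφspec i hi)
    exact le_trans (Finset.card_le_card_of_injOn φ hφmem hinj) hcard
  set S : Finset ℕ := Finset.range N \ T with hSdef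
  have hScard : N - k ≤ S.card := by
    have hTsub : T ⊆ Finset.range N := by
      rw [hTdef]; exact Finset.filter_subset _ _
    have hcards : S.card = N - T.card := by
      rw [hSdef, Finset.card_sdiff_of_subset hTsub, Finset.card_range]
    omega
  -- pointwise lower bound
  have hpt : ∀ x, (∑ i ∈ S, Set.indicator (B i)
        (fun _ => ENNReal.ofReal ((1 - δ) * c i) ^ q) x)
      ≤ (‖F x - g x‖₊ : ℝ≥0∞) ^ q := by
    intro x
    by_cases hx : ∃ i ∈ S, x ∈ B i
    · obtain ⟨i, hi, hxB⟩ := hx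
      have hiN : i ∈ Finset.range N := (Finset.mem_sdiff.mp hi).1
      have hiT : i ∉ T := (Finset.mem_sdiff.mp hi).2
      rw [Finset.sum_eq_single_of_mem i hi]
      · rw [Set.indicator_of_mem hxB]
        have hbound : (1 - δ) * c i ≤ |F x - g x| := by
          have : ¬ ∃ w ∈ s, |c i - w| < (1 - δ) * c i := by
            intro hcon
            exact hiT (by rw [hTdef]; exact Finset.mem_filter.mpr ⟨hiN, hcon⟩)
          push_neg at this
          have := this (g x) (hgs x)
          rwa [hFx i hiN x hxB]
        calc ENNReal.ofReal ((1 - δ) * c i) ^ q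
            ≤ ENNReal.ofReal |F x - g x| ^ q :=
              ENNReal.rpow_le_rpow (ENNReal.ofReal_le_ofReal hbound) hq0.le
          _ = (‖F x - g x‖₊ : ℝ≥0∞) ^ q := by
              rw [← Real.enorm_eq_ofReal (abs_nonneg _), enorm_eq_nnnorm, Real.nnnorm_abs]
      · intro j hj hji
        exact Set.indicator_of_notMem (fun hxj => (hBdisj hji).le_bot ⟨hxj, hxB⟩) _
    · push_neg at hx
      rw [Finset.sum_eq_zero fun i hi => Set.indicator_of_notMem (hx i hi) _]
      exact zero_le
  -- integrate
  have hIntLow : (ENNReal.ofReal ((1 - δ) ^ q) * ((N - k : ℕ) * ENNReal.ofReal (v 0)))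
      ≤ ∫⁻ a, (‖F a - g a‖₊ : ℝ≥0∞) ^ q ∂μ := by
    have h1 := lintegral_mono (μ := μ) hpt
    rw [lintegral_finset_sum _ (fun i _ => (measurable_const.indicator (hBmeas i)))] at h1
    refine le_trans ?_ h1
    have hterm : ∀ i, i ∈ S →
        (∫⁻ a, Set.indicator (B i) (fun _ => ENNReal.ofReal ((1 - δ) * c i) ^ q) a ∂μ)
          = ENNReal.ofReal ((1 - δ) ^ q) * ENNReal.ofReal (v 0) := by
      intro i _
      rw [lintegral_indicator_const (hBmeas i),
        show μ (B i) = ENNReal.ofReal (v i) from (ENNReal.ofReal_toReal (hBfin i).ne).symm,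
        ENNReal.ofReal_rpow_of_pos (by nlinarith [hc i]),
        ← ENNReal.ofReal_mul (Real.rpow_nonneg (by nlinarith [hc i]) q),
        show ((1 - δ) * c i) ^ q * v i = (1 - δ) ^ q * v 0 by
          rw [Real.mul_rpow (by linarith) (hc i).le, mul_assoc, hcqv i],
        ENNReal.ofReal_mul (Real.rpow_nonneg (by linarith) q)]
    rw [Finset.sum_congr rfl hterm, Finset.sum_const, nsmul_eq_mul]
    calc ENNReal.ofReal ((1 - δ) ^ q) * ((N - k : ℕ) * ENNReal.ofReal (v 0))
        = ((N - k : ℕ) : ℝ≥0∞) * (ENNReal.ofReal ((1 - δ) ^ q) * ENNReal.ofReal (v 0)) := by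
          ring
      _ ≤ (S.card : ℝ≥0∞) * (ENNReal.ofReal ((1 - δ) ^ q) * ENNReal.ofReal (v 0)) :=
          mul_le_mul_left (Nat.cast_le.mpr hScard) _
  -- convert to norms
  have hcoe : (↑(f - h) : Ω → ℝ) =ᵐ[μ] fun a => F a - g a := by
    filter_upwards [Lp.coeFn_sub f h, hFmem.coeFn_toLp, hae] with x h1 h2 h3
    rw [h1, Pi.sub_apply, h2, h3]
  have hXfin : (∫⁻ a, (‖F a - g a‖₊ : ℝ≥0∞) ^ q ∂μ) ≠ ∞ := by
    have h1 : eLpNorm (fun a => F a - g a) p μ < ∞ := by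
      rw [← eLpNorm_congr_ae hcoe]
      exact Lp.eLpNorm_lt_top _
    have h2 : eLpNorm (fun a => F a - g a) p μ
        = (∫⁻ a, (‖F a - g a‖₊ : ℝ≥0∞) ^ q ∂μ) ^ (1/q) :=
      eLpNorm_eq_lintegral_rpow_enorm_toReal hp0 hp
    intro hcon
    rw [h2, hcon, ENNReal.top_rpow_of_pos (by positivity)] at h1
    exact (lt_irrefl _ h1).elim
  have hnorm2 : ‖f - h‖ ^ q = (∫⁻ a, (‖F a - g a‖₊ : ℝ≥0∞) ^ q ∂μ).toReal := by
    rw [Lp.norm_def, eLpNorm_congr_ae hcoe, norm_rpow_helper μ p hp0 hp]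
  rw [hnorm2, hfnorm]
  calc (1 - δ) ^ q * (((N - k : ℕ) : ℝ) / N) * ((N:ℝ) * v 0)
      = (1 - δ) ^ q * (((N - k : ℕ) : ℝ) * v 0) := by
        field_simp
    _ = (ENNReal.ofReal ((1 - δ) ^ q) * ((N - k : ℕ) * ENNReal.ofReal (v 0))).toReal := by
        rw [ENNReal.toReal_mul, ENNReal.toReal_mul,
          ENNReal.toReal_ofReal (Real.rpow_nonneg (by linarith) q),
          ENNReal.toReal_natCast, ENNReal.toReal_ofReal (hv 0).le]
    _ ≤ (∫⁻ a, (‖F a - g a‖₊ : ℝ≥0∞) ^ q ∂μ).toReal :=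
        ENNReal.toReal_mono hXfin hIntLow

lemma Gpk_zero_mem (μ : Measure Ω) (p : ℝ≥0∞) [Fact (1 ≤ p)] {k : ℕ} (hk : 1 ≤ k) :
    (0 : Lp ℝ p μ) ∈ Gpk p μ k := by
  refine ⟨fun _ => 0, ⟨measurable_const, {0}, by simpa using hk, fun x => by simp⟩, ?_⟩
  filter_upwards [Lp.coeFn_zero ℝ p μ] with x hx using hx

lemma Gpk_smul (μ : Measure Ω) (p : ℝ≥0∞) [Fact (1 ≤ p)] {k : ℕ} (c : ℝ)
    {h : Lp ℝ p μ} (hh : h ∈ Gpk p μ k) : c • h ∈ Gpk p μ k := by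
  obtain ⟨g, ⟨hgm, s, hcard, hgs⟩, hae⟩ := hh
  refine ⟨fun x => c * g x, ⟨hgm.const_mul c, s.image (c * ·),
    le_trans (Finset.card_image_le) hcard, fun x => Finset.mem_image_of_mem _ (hgs x)⟩, ?_⟩
  filter_upwards [hae, Lp.coeFn_smul c h] with x hx hx2
  rw [hx2, Pi.smul_apply, hx, smul_eq_mul]

lemma key2 (μ : MeasureTheory.Measure Ω)
    (p : ℝ≥0∞) [Fact (1 ≤ p)] (hp : p ≠ ∞)
    (A : ℕ → Set Ω) (hmeas : ∀ n, MeasurableSet (A n))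
    (hdisj : Pairwise (Function.onFun Disjoint A)) (hpos : ∀ n, 0 < μ (A n))
    (hto0 : Tendsto (fun n => μ (A n)) atTop (𝓝 0))
    (k : ℕ) (w : ℝ) (hw0 : 0 ≤ w) (hw1 : w < 1) :
    ∃ c : ℝ, w < c ∧ ∃ f : Lp ℝ p μ, f ≠ 0 ∧
      ∀ h ∈ Gpk p μ k, c * ‖f‖ ^ p.toReal ≤ ‖f - h‖ ^ p.toReal := by
  have hp1 : 1 ≤ p := Fact.out
  have hp0 : p ≠ 0 := by intro h0; rw [h0] at hp1; simp at hp1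
  set q : ℝ := p.toReal with hqdef
  have hq0 : 0 < q := ENNReal.toReal_pos hp0 hp
  set s : ℝ := (1 + w) / 2 with hsdef
  have hs0 : 0 < s := by rw [hsdef]; linarith
  have hs1 : s < 1 := by rw [hsdef]; linarith
  have hsw : w < s := by rw [hsdef]; linarith
  set δ : ℝ := 1 - s ^ (1 / q) with hδdef
  have hsq1 : s ^ (1 / q) < 1 := Real.rpow_lt_one hs0.le hs1 (by positivity)
  have hsqpos : 0 < s ^ (1 / q) := Real.rpow_pos_of_pos hs0 _
  have hδ0 : 0 < δ := by rw [hδdef]; linarith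
  have hδ1 : δ < 1 := by rw [hδdef]; linarith
  have h1δ : (1 - δ) ^ q = s := by
    rw [hδdef]
    have : (1 : ℝ) - (1 - s ^ (1 / q)) = s ^ (1 / q) := by ring
    rw [this, ← Real.rpow_mul hs0.le, one_div_mul_cancel hq0.ne', Real.rpow_one]
  obtain ⟨N0, hN0⟩ := exists_nat_gt ((k : ℝ) * s / (s - w))
  set N : ℕ := max N0 (k + 1) with hNdef
  have hkN : k < N := lt_of_lt_of_le (Nat.lt_succ_self k) (le_max_right _ _)
  have hNge : (N0 : ℝ) ≤ N := by exact_mod_cast le_max_left N0 (k + 1)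
  have hNpos : (0 : ℝ) < N := by exact_mod_cast Nat.pos_of_ne_zero (by omega)
  obtain ⟨f, hf0, hbound⟩ := key_construction μ p hp A hmeas hdisj hpos hto0 k N hkN δ hδ0 hδ1
  refine ⟨(1 - δ) ^ q * (((N - k : ℕ) : ℝ) / N), ?_, f, hf0, hbound⟩
  rw [h1δ, Nat.cast_sub hkN.le]
  have hsw' : 0 < s - w := by linarith
  have hks : (k : ℝ) * s < N * (s - w) :=
    (div_lt_iff₀ hsw').mp (lt_of_lt_of_le hN0 hNge)
  rw [mul_div_assoc', lt_div_iff₀ hNpos]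
  nlinarith

theorem unitBall_not_uniformlyApproximable (μ : MeasureTheory.Measure Ω)
    (p : ℝ≥0∞) [Fact (1 ≤ p)] (hp : p ≠ ∞)
    (A : ℕ → Set Ω) (hmeas : ∀ n, MeasurableSet (A n))
    (hdisj : Pairwise (Function.onFun Disjoint A)) (hpos : ∀ n, 0 < μ (A n))
    (hto0 : Tendsto (fun n => μ (A n)) atTop (𝓝 0)) :
    (¬ ∀ ε > (0 : ℝ), ∃ k : ℕ, ∀ f ∈ Metric.closedBall (0 : Lp ℝ p μ) 1,
        ∃ h ∈ Gpk p μ k, ‖f - h‖ ≤ ε) ∧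
    ∀ k : ℕ, 1 ≤ k →
      sSup {r : ℝ | ∃ f : Lp ℝ p μ, f ≠ 0 ∧
        r = Metric.infDist f (Gpk p μ k) ^ p.toReal / ‖f‖ ^ p.toReal} = 1 := by
  have hp1 : 1 ≤ p := Fact.out
  have hp0 : p ≠ 0 := by intro h0; rw [h0] at hp1; simp at hp1
  set q : ℝ := p.toReal with hqdef
  have hq0 : 0 < q := ENNReal.toReal_pos hp0 hp
  constructor
  · -- not uniformly approximable
    intro Hyp
    obtain ⟨k, hk⟩ := Hyp (1 / 2) (by norm_num)
    set w : ℝ := (1 / 2 : ℝ) ^ q with hwdef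
    have hw0 : 0 ≤ w := Real.rpow_nonneg (by norm_num) _
    have hw1 : w < 1 := Real.rpow_lt_one (by norm_num) (by norm_num) hq0
    obtain ⟨c, hwc, f, hf0, hbound⟩ :=
      key2 μ p hp A hmeas hdisj hpos hto0 k w hw0 hw1
    have hfpos : 0 < ‖f‖ := norm_pos_iff.mpr hf0
    set f' : Lp ℝ p μ := ‖f‖⁻¹ • f with hf'def
    have hf'norm : ‖f'‖ = 1 := by
      rw [hf'def, norm_smul, norm_inv, norm_norm, inv_mul_cancel₀ hfpos.ne']
    obtain ⟨h, hh, hdist⟩ := hk f' (by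
      rw [Metric.mem_closedBall, dist_zero_right, hf'norm])
    have hmem : ‖f‖ • h ∈ Gpk p μ k := Gpk_smul μ p ‖f‖ hh
    have hdiff : f - ‖f‖ • h = ‖f‖ • (f' - h) := by
      rw [smul_sub, hf'def, smul_smul, mul_inv_cancel₀ hfpos.ne', one_smul]
    have hnorm : ‖f - ‖f‖ • h‖ = ‖f‖ * ‖f' - h‖ := by
      rw [hdiff, norm_smul, norm_norm]
    have h1 : c * ‖f‖ ^ q ≤ (‖f‖ * ‖f' - h‖) ^ q := by
      rw [← hnorm]; exact hbound _ hmem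
    have h2 : (‖f‖ * ‖f' - h‖) ^ q ≤ (‖f‖ * (1 / 2)) ^ q :=
      Real.rpow_le_rpow (by positivity) (by nlinarith [norm_nonneg (f' - h)]) hq0.le
    have h3 : (‖f‖ * (1 / 2)) ^ q = ‖f‖ ^ q * w := by
      rw [Real.mul_rpow (norm_nonneg f) (by norm_num), hwdef]
    have hfq : 0 < ‖f‖ ^ q := Real.rpow_pos_of_pos hfpos _
    nlinarith
  · -- the sSup equality
    intro k hk
    have hGne : (Gpk p μ k).Nonempty := ⟨0, Gpk_zero_mem μ p hk⟩
    apply csSup_eq_of_forall_le_of_forall_lt_exists_gt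
    · -- nonempty
      obtain ⟨c, hwc, f, hf0, hbound⟩ :=
        key2 μ p hp A hmeas hdisj hpos hto0 k 0 le_rfl one_pos
      exact ⟨_, f, hf0, rfl⟩
    · -- bounded by 1
      rintro a ⟨f, hf0, rfl⟩
      have hfpos : 0 < ‖f‖ := norm_pos_iff.mpr hf0
      have h1 : Metric.infDist f (Gpk p μ k) ≤ ‖f‖ := by
        simpa [dist_zero_right] using
          Metric.infDist_le_dist_of_mem (Gpk_zero_mem μ p hk)
      rw [div_le_one (Real.rpow_pos_of_pos hfpos _)]
      exact Real.rpow_le_rpow Metric.infDist_nonneg h1 hq0.le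
    · -- values close to 1
      intro w hw
      obtain ⟨c, hwc, f, hf0, hbound⟩ :=
        key2 μ p hp A hmeas hdisj hpos hto0 k (max w 0) (le_max_right _ _)
          (max_lt hw one_pos)
      have hc0 : 0 < c := lt_of_le_of_lt (le_max_right w 0) hwc
      have hfpos : 0 < ‖f‖ := norm_pos_iff.mpr hf0
      have hfq : 0 < ‖f‖ ^ q := Real.rpow_pos_of_pos hfpos _
      refine ⟨_, ⟨f, hf0, rfl⟩, ?_⟩
      set b : ℝ := (c * ‖f‖ ^ q) ^ (1 / q) with hbdef
      have hb0 : 0 ≤ b := Real.rpow_nonneg (by positivity) _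
      have hbq : b ^ q = c * ‖f‖ ^ q := by
        rw [hbdef, ← Real.rpow_mul (by positivity), one_div_mul_cancel hq0.ne',
          Real.rpow_one]
      have hble : b ≤ Metric.infDist f (Gpk p μ k) := by
        by_contra hlt
        push_neg at hlt
        obtain ⟨h, hh, hdlt⟩ := (Metric.infDist_lt_iff hGne).mp hlt
        rw [dist_eq_norm] at hdlt
        have h1 : ‖f - h‖ ^ q < b ^ q :=
          Real.rpow_lt_rpow (norm_nonneg _) hdlt hq0
        rw [hbq] at h1
        exact absurd (hbound h hh) (not_le.mpr h1)
      have h2 : c * ‖f‖ ^ q ≤ Metric.infDist f (Gpk p μ k) ^ q := by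
        rw [← hbq]
        exact Real.rpow_le_rpow hb0 hble hq0.le
      have h3 : c ≤ Metric.infDist f (Gpk p μ k) ^ q / ‖f‖ ^ q :=
        (le_div_iff₀ hfq).mpr (by linarith)
      calc w ≤ max w 0 := le_max_left _ _
        _ < c := hwc
        _ ≤ _ := h3
end
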